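/- arXiv:2407.00213 — 3 statements merged into one kernel-verified Lean document; each statement's English description precedes it below -/
import Mathlib

section
/- For a finite connected graph with Laplacian L, nonempty Dirichlet set Z, and boundary data f : Z → ℝ, the solution u of (Lu)(i) = 0 for i ∈ V \ Z, u = f on Z, exists and is unique; equivalently, the principal submatrix L_{c,c} of L indexed by V \ Z is invertible. -/
open Finset

/-- Adjacency matrix (entries 0/1) of a directed graph given by edge relation `E`. -/
def adjM {V : Type*} [Fintype V] (E : V → V → Prop) [DecidableRel E] : Matrix V V ℝ :=
  Matrix.of fun i j => if E i j then 1 else 0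

/-- Out-degree graph Laplacian `L = D - A`. -/
noncomputable def lapM {V : Type*} [Fintype V] [DecidableEq V] (E : V → V → Prop)
    [DecidableRel E] : Matrix V V ℝ :=
  Matrix.diagonal (fun i => ∑ j, adjM E i j) - adjM E

lemma lap_apply {V : Type*} [Fintype V] [DecidableEq V] (E : V → V → Prop) [DecidableRel E]
    (u : V → ℝ) (i : V) :
    (lapM E).mulVec u i = ∑ j, adjM E i j * (u i - u j) := by
  rw [lapM, Matrix.sub_mulVec, Pi.sub_apply, Matrix.mulVec_diagonal]
  simp only [mul_sub, Finset.sum_sub_distrib, ← Finset.sum_mul]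
  congr 1

lemma lapHarmonic_nonpos {V : Type*} [Fintype V] [DecidableEq V] (E : V → V → Prop)
    [DecidableRel E] (hconn : ∀ i j : V, Relation.ReflTransGen E i j)
    (Z : Finset V) (hZ : Z.Nonempty) (u : V → ℝ)
    (hh : ∀ i ∉ Z, (lapM E).mulVec u i = 0) (h0 : ∀ i ∈ Z, u i = 0) :
    ∀ i, u i ≤ 0 := by
  obtain ⟨z, hz⟩ := hZ
  obtain ⟨i0, -, hmax⟩ := Finset.exists_max_image Finset.univ u ⟨z, Finset.mem_univ z⟩
  have hmax' : ∀ a, u a ≤ u i0 := fun a => hmax a (mem_univ a)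
  suffices h : u i0 ≤ 0 by intro i; exact le_trans (hmax' i) h
  have key : ∀ a, Relation.ReflTransGen E a z → u a = u i0 → u i0 ≤ 0 := by
    intro a hpath
    induction hpath using Relation.ReflTransGen.head_induction_on with
    | refl => intro h; rw [← h, h0 z hz]
    | head hac _ ih =>
      rename_i a c _
      intro ha
      by_cases haZ : a ∈ Z
      · rw [← ha, h0 a haZ]
      · have h1 : ∑ j, adjM E a j * (u a - u j) = 0 := by
          rw [← lap_apply]; exact hh a haZ
        have h2 : ∀ j ∈ Finset.univ, (0:ℝ) ≤ adjM E a j * (u a - u j) := by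
          intro j _
          apply mul_nonneg
          · simp only [adjM, Matrix.of_apply]; positivity
          · rw [ha]; linarith [hmax' j]
        have h3 := (Finset.sum_eq_zero_iff_of_nonneg h2).mp h1 c (mem_univ c)
        have hA : adjM E a c = 1 := by simp [adjM, hac]
        rw [hA, one_mul, sub_eq_zero] at h3
        exact ih (h3 ▸ ha)
  exact key i0 (hconn i0 z) rfl

lemma lapHarmonic_zero {V : Type*} [Fintype V] [DecidableEq V] (E : V → V → Prop)
    [DecidableRel E] (hconn : ∀ i j : V, Relation.ReflTransGen E i j)
    (Z : Finset V) (hZ : Z.Nonempty) (u : V → ℝ)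
    (hh : ∀ i ∉ Z, (lapM E).mulVec u i = 0) (h0 : ∀ i ∈ Z, u i = 0) :
    u = 0 := by
  have h1 := lapHarmonic_nonpos E hconn Z hZ u hh h0
  have h2 := lapHarmonic_nonpos E hconn Z hZ (-u)
    (fun i hi => by rw [Matrix.mulVec_neg, Pi.neg_apply, hh i hi, neg_zero])
    (fun i hi => by rw [Pi.neg_apply, h0 i hi, neg_zero])
  funext i
  have := h2 i
  simp only [Pi.neg_apply, neg_nonpos] at this
  exact le_antisymm (h1 i) this

/-- Existence and uniqueness of the Dirichlet problem for the graph Laplacian with a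
nonempty boundary set `Z`; equivalently, the principal submatrix `L_{c,c}` of `L`
indexed by `V \ Z` is invertible. -/
theorem stmt3 {V : Type*} [Fintype V] [DecidableEq V] (E : V → V → Prop) [DecidableRel E]
    (hconn : ∀ i j : V, Relation.ReflTransGen E i j)
    (hdeg : ∀ i : V, ∃ j, E i j)
    (Z : Finset V) (hZ : Z.Nonempty) :
    (∀ f : V → ℝ, ∃! u : V → ℝ,
      (∀ i ∉ Z, (lapM E).mulVec u i = 0) ∧ (∀ i ∈ Z, u i = f i)) ∧
    IsUnit ((lapM E).submatrix (Subtype.val : {i : V // i ∉ Z} → V) (Subtype.val : {i : V // i ∉ Z} → V)) := by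
  classical
  set L := lapM E with hL
  set M := L.submatrix (Subtype.val : {i : V // i ∉ Z} → V) (Subtype.val : {i : V // i ∉ Z} → V) with hM
  -- split a mulVec over V into boundary and interior parts
  have hsplit : ∀ (w : V → ℝ) (i : V),
      L.mulVec w i = (∑ j ∈ Z, L i j * w j) + ∑ j : {j : V // j ∉ Z}, L i j.val * w j.val := by
    intro w i
    rw [show L.mulVec w i = ∑ j, L i j * w j from rfl,
      ← Finset.sum_filter_add_sum_filter_not Finset.univ (· ∈ Z) (fun j => L i j * w j)]
    congr 1
    · apply Finset.sum_congr _ (fun _ _ => rfl)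
      ext x; simp
    · exact Finset.sum_subtype _ (by simp) _
  have hker : ∀ v : {i : V // i ∉ Z} → ℝ, M.mulVec v = 0 → v = 0 := by
    intro v hv
    set w : V → ℝ := fun i => if h : i ∉ Z then v ⟨i, h⟩ else 0 with hw
    have hwz : ∀ i ∈ Z, w i = 0 := by intro i hi; simp [hw, hi]
    have hwh : ∀ i ∉ Z, L.mulVec w i = 0 := by
      intro i hi
      rw [hsplit]
      have h1 : ∑ j ∈ Z, L i j * w j = 0 :=
        Finset.sum_eq_zero (fun j hj => by rw [hwz j hj, mul_zero])
      have h2 : ∑ j : {j : V // j ∉ Z}, L i j.val * w j.val = M.mulVec v ⟨i, hi⟩ := by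
        apply Finset.sum_congr rfl
        intro j _
        simp [hw, j.prop, M, Matrix.submatrix_apply]
      rw [h1, h2, hv]
      simp
    have := lapHarmonic_zero E hconn Z hZ w hwh hwz
    funext j
    have : w j.val = 0 := by rw [this]; rfl
    simpa [hw, j.prop] using this
  have hdet : M.det ≠ 0 := by
    intro hd
    obtain ⟨v, hv0, hv⟩ := Matrix.exists_mulVec_eq_zero_iff.mpr hd
    exact hv0 (hker v hv)
  have hunit : IsUnit M := (Matrix.isUnit_iff_isUnit_det M).mpr (isUnit_iff_ne_zero.mpr hdet)
  refine ⟨?_, hunit⟩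
  intro f
  set b : {i : V // i ∉ Z} → ℝ := fun i => -∑ j ∈ Z, L i.val j * f j with hb
  set x : {i : V // i ∉ Z} → ℝ := M⁻¹.mulVec b with hx
  have hMx : M.mulVec x = b := by
    rw [hx, Matrix.mulVec_mulVec, Matrix.mul_nonsing_inv M (isUnit_iff_ne_zero.mpr hdet),
      Matrix.one_mulVec]
  set u : V → ℝ := fun i => if h : i ∉ Z then x ⟨i, h⟩ else f i with hu
  have huZ : ∀ i ∈ Z, u i = f i := by intro i hi; simp [hu, hi]
  have huh : ∀ i ∉ Z, L.mulVec u i = 0 := by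
    intro i hi
    rw [hsplit]
    have h1 : ∑ j ∈ Z, L i j * u j = ∑ j ∈ Z, L i j * f j :=
      Finset.sum_congr rfl (fun j hj => by rw [huZ j hj])
    have h2 : ∑ j : {j : V // j ∉ Z}, L i j.val * u j.val = M.mulVec x ⟨i, hi⟩ := by
      apply Finset.sum_congr rfl
      intro j _
      simp [hu, j.prop, M, Matrix.submatrix_apply]
    rw [h1, h2, hMx, hb]
    ring
  refine ⟨u, ⟨huh, huZ⟩, ?_⟩
  rintro y ⟨hyh, hyZ⟩
  have hdiff := lapHarmonic_zero E hconn Z hZ (y - u)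
    (fun i hi => by rw [Matrix.mulVec_sub, Pi.sub_apply, hyh i hi, huh i hi, sub_zero])
    (fun i hi => by rw [Pi.sub_apply, hyZ i hi, huZ i hi, sub_self])
  funext i
  have := congrFun hdiff i
  simp only [Pi.sub_apply, Pi.zero_apply, sub_eq_zero] at this
  exact this
end

section
/- With the same setup, the set function T ↦ v_i(T) = P_i[τ(Z_m ∪ T) < τ(Z')] is submodular: for all T ⊆ V \ (Z_m ∪ Z') and x, y ∉ Z_m ∪ Z' ∪ T, v_i(T ∪ {x}) - v_i(T) ≥ v_i(T ∪ {x,y}) - v_i(T ∪ {y}). -/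
open Finset MeasureTheory

/-- First hitting time (valued in `ℕ∞`) of a vertex set `U` by the process `X`. -/
noncomputable def hitTime {V Ω : Type*} (X : ℕ → Ω → V) (U : Set V) (ω : Ω) : ℕ∞ :=
  sInf {t : ℕ∞ | ∃ n : ℕ, t = (n : ℕ∞) ∧ X n ω ∈ U}

/-- `X` is a simple random walk on the directed graph `E`, started at `i`: its
finite-dimensional distributions are given by products of the transition
probabilities `A i j / d i` (uniform over out-neighbors). -/
def IsSRW {V Ω : Type*} [Fintype V] [DecidableEq V] [MeasurableSpace Ω] (E : V → V → Prop) [DecidableRel E]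
    (μ : Measure Ω) (i : V) (X : ℕ → Ω → V) : Prop :=
  ∀ (n : ℕ) (p : Fin (n + 1) → V),
    μ {ω | ∀ s : Fin (n + 1), X s ω = p s} =
      ENNReal.ofReal ((if p 0 = i then (1 : ℝ) else 0) *
        ∏ t : Fin n, ((if E (p t.castSucc) (p t.succ) then (1 : ℝ) else 0) /
          (Finset.univ.filter (E (p t.castSucc))).card))

lemma hitTime_union {V Ω : Type*} (X : ℕ → Ω → V) (U W : Set V) (ω : Ω) :
    hitTime X (U ∪ W) ω = min (hitTime X U ω) (hitTime X W ω) := by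
  unfold hitTime
  rw [← sInf_union]
  congr 1
  ext t
  simp only [Set.mem_setOf_eq, Set.mem_union]
  constructor
  · rintro ⟨n, rfl, h | h⟩
    · exact Or.inl ⟨n, rfl, h⟩
    · exact Or.inr ⟨n, rfl, h⟩
  · rintro (⟨n, rfl, h⟩ | ⟨n, rfl, h⟩)
    · exact ⟨n, rfl, Or.inl h⟩
    · exact ⟨n, rfl, Or.inr h⟩

lemma event_union {V Ω : Type*} (X : ℕ → Ω → V) (U W Z : Set V) :
    {ω | hitTime X (U ∪ W) ω < hitTime X Z ω} =
      {ω | hitTime X U ω < hitTime X Z ω} ∪ {ω | hitTime X W ω < hitTime X Z ω} := by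
  ext ω
  simp [hitTime_union, min_lt_iff]

lemma measure_submod {Ω : Type*} [MeasurableSpace Ω] (μ : Measure Ω) (A B : Set Ω) :
    μ (A ∪ B) + μ (A ∩ B) ≤ μ A + μ B := by
  calc μ (A ∪ B) + μ (A ∩ B)
      ≤ μ (toMeasurable μ A ∪ toMeasurable μ B) + μ (toMeasurable μ A ∩ toMeasurable μ B) :=
        add_le_add
          (measure_mono (Set.union_subset_union (subset_toMeasurable μ A) (subset_toMeasurable μ B)))
          (measure_mono (Set.inter_subset_inter (subset_toMeasurable μ A) (subset_toMeasurable μ B)))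
    _ = μ (toMeasurable μ A) + μ (toMeasurable μ B) :=
        measure_union_add_inter _ (measurableSet_toMeasurable μ B)
    _ = μ A + μ B := by rw [measure_toMeasurable, measure_toMeasurable]

/-- Submodularity of `T ↦ v_i(T) = P_i[τ(Z_m ∪ T) < τ(Z')]`. -/
theorem stmt7 {V Ω : Type*} [Fintype V] [DecidableEq V] [MeasurableSpace Ω]
    (E : V → V → Prop) [DecidableRel E]
    (hconn : ∀ i j : V, Relation.ReflTransGen E i j)
    (hdeg : ∀ i : V, ∃ j, E i j)
    (μ : Measure Ω) [IsProbabilityMeasure μ]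
    (i : V) (X : ℕ → Ω → V) (hX : IsSRW E μ i X)
    (Zm Z' : Finset V) (hZm : Zm.Nonempty) (hZ' : Z'.Nonempty)
    (hdisj : Disjoint Zm Z')
    (T : Finset V) (hT : ∀ v ∈ T, v ∉ Zm ∪ Z')
    (x y : V) (hxy : x ≠ y)
    (hx : x ∉ Zm ∪ Z' ∪ T) (hy : y ∉ Zm ∪ Z' ∪ T) :
    let v : Finset V → ℝ := fun T' =>
      (μ {ω | hitTime X ↑(Zm ∪ T') ω < hitTime X ↑Z' ω}).toReal
    v (insert y (insert x T)) - v (insert y T) ≤ v (insert x T) - v T := by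
  intro v
  set Ev : Set V → Set Ω := fun S => {ω | hitTime X S ω < hitTime X ↑Z' ω} with hEv
  set E0 : Set Ω := Ev ↑(Zm ∪ T) with hE0
  set Ex : Set Ω := Ev {x} with hEx
  set Ey : Set Ω := Ev {y} with hEy
  have hcx : ((Zm ∪ insert x T : Finset V) : Set V) = ↑(Zm ∪ T) ∪ {x} := by
    ext a; simp only [Finset.coe_union, Finset.coe_insert, Set.mem_union, Set.mem_insert_iff, Set.mem_singleton_iff]; tauto
  have hcy : ((Zm ∪ insert y T : Finset V) : Set V) = ↑(Zm ∪ T) ∪ {y} := by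
    ext a; simp only [Finset.coe_union, Finset.coe_insert, Set.mem_union, Set.mem_insert_iff, Set.mem_singleton_iff]; tauto
  have hcxy : ((Zm ∪ insert y (insert x T) : Finset V) : Set V) = (↑(Zm ∪ T) ∪ {x}) ∪ {y} := by
    ext a; simp only [Finset.coe_union, Finset.coe_insert, Set.mem_union, Set.mem_insert_iff, Set.mem_singleton_iff]; tauto
  have hvT : v T = (μ E0).toReal := rfl
  have hvx : v (insert x T) = (μ (E0 ∪ Ex)).toReal := by
    simp only [v, hcx, hE0, hEx, hEv, event_union]
  have hvy : v (insert y T) = (μ (E0 ∪ Ey)).toReal := by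
    simp only [v, hcy, hE0, hEy, hEv, event_union]
  have hvxy : v (insert y (insert x T)) = (μ ((E0 ∪ Ex) ∪ Ey)).toReal := by
    simp only [v, hcxy, hE0, hEx, hEy, hEv, event_union]
  -- key submodular inequality in ℝ≥0∞
  have key : μ ((E0 ∪ Ex) ∪ Ey) + μ E0 ≤ μ (E0 ∪ Ex) + μ (E0 ∪ Ey) := by
    have h1 : (E0 ∪ Ex) ∪ (E0 ∪ Ey) = (E0 ∪ Ex) ∪ Ey := by
      ext ω; simp only [Set.mem_union]; tauto
    have h2 : E0 ⊆ (E0 ∪ Ex) ∩ (E0 ∪ Ey) :=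
      Set.subset_inter Set.subset_union_left Set.subset_union_left
    calc μ ((E0 ∪ Ex) ∪ Ey) + μ E0
        ≤ μ ((E0 ∪ Ex) ∪ (E0 ∪ Ey)) + μ ((E0 ∪ Ex) ∩ (E0 ∪ Ey)) := by
          rw [h1]; exact add_le_add le_rfl (measure_mono h2)
      _ ≤ μ (E0 ∪ Ex) + μ (E0 ∪ Ey) := measure_submod μ _ _
  have fin : ∀ S : Set Ω, μ S ≠ ⊤ := fun S => measure_ne_top μ S
  have key' : (μ ((E0 ∪ Ex) ∪ Ey)).toReal + (μ E0).toReal ≤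
      (μ (E0 ∪ Ex)).toReal + (μ (E0 ∪ Ey)).toReal := by
    rw [← ENNReal.toReal_add (fin _) (fin _), ← ENNReal.toReal_add (fin _) (fin _)]
    exact ENNReal.toReal_mono (by simp [fin]) key
  rw [hvT, hvx, hvy, hvxy]
  linarith
end

section
/- Let L be the graph Laplacian of a finite strongly connected directed graph, Z ⊆ V nonempty, and c = V \ Z. For ε > 0 and φ : c → ℝ with φ ≥ 0, the matrix L_{c,c} + ε^{−1} diag(φ) is invertible, and the solution v_c of L_{c,c} v_c + L_{c,m} e + ε^{−1} φ ⊙ (v_c − e) = 0 is given by v_c = [L_{c,c} + ε^{−1} diag(φ)]^{−1}(ε^{−1} φ − L_{c,m} e). -/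
open Finset

lemma stmt14_row {V : Type*} [Fintype V] [DecidableEq V] (E : V → V → Prop) [DecidableRel E]
    (Z : Finset V) (ε : ℝ) (φ : {i : V // i ∉ Z} → ℝ)
    (w : {i : V // i ∉ Z} → ℝ) (i : {i : V // i ∉ Z}) :
    ((lapM E).submatrix Subtype.val Subtype.val + ε⁻¹ • Matrix.diagonal φ).mulVec w i
      = (∑ l : V, adjM E i.val l) * w i
        - (∑ k : {i : V // i ∉ Z}, adjM E i.val k.val * w k) + ε⁻¹ * (φ i * w i) := by
  classical
  have h1 : ((lapM E).submatrix Subtype.val Subtype.val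
        + ε⁻¹ • Matrix.diagonal φ).mulVec w i
      = ((lapM E).submatrix Subtype.val Subtype.val).mulVec w i + ε⁻¹ * (φ i * w i) := by
    simp [Matrix.add_mulVec, Matrix.smul_mulVec, Matrix.mulVec_diagonal]
  rw [h1]
  have h2 : ((lapM E).submatrix Subtype.val Subtype.val).mulVec w i
      = ∑ k : {i : V // i ∉ Z},
          (Matrix.diagonal (fun i => ∑ j, adjM E i j) i.val k.val - adjM E i.val k.val) * w k := by
    simp [Matrix.mulVec, dotProduct, lapM, Matrix.sub_apply]
  rw [h2]
  have h3 : ∑ k : {i : V // i ∉ Z},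
        (Matrix.diagonal (fun i => ∑ j, adjM E i j) i.val k.val - adjM E i.val k.val) * w k
      = (∑ k : {i : V // i ∉ Z}, Matrix.diagonal (fun i => ∑ j, adjM E i j) i.val k.val * w k)
        - ∑ k : {i : V // i ∉ Z}, adjM E i.val k.val * w k := by
    rw [← Finset.sum_sub_distrib]
    exact Finset.sum_congr rfl fun k _ => by ring
  rw [h3]
  have h4 : (∑ k : {i : V // i ∉ Z},
        Matrix.diagonal (fun i => ∑ j, adjM E i j) i.val k.val * w k)
      = (∑ l : V, adjM E i.val l) * w i := by
    rw [Finset.sum_eq_single i]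
    · simp
    · intro k _ hk
      have hne : i.val ≠ k.val := fun h => hk (Subtype.ext h).symm
      rw [Matrix.diagonal_apply_ne _ hne, zero_mul]
    · intro h; exact absurd (Finset.mem_univ i) h
  rw [h4]

lemma stmt14_ker {V : Type*} [Fintype V] [DecidableEq V] (E : V → V → Prop) [DecidableRel E]
    (hconn : ∀ i j : V, Relation.ReflTransGen E i j)
    (Z : Finset V) (hZ : Z.Nonempty)
    (ε : ℝ) (hε : 0 < ε)
    (φ : {i : V // i ∉ Z} → ℝ) (hφ : ∀ i, 0 ≤ φ i)
    (v : {i : V // i ∉ Z} → ℝ)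
    (hv : ((lapM E).submatrix Subtype.val Subtype.val
        + ε⁻¹ • Matrix.diagonal φ).mulVec v = 0) : v = 0 := by
  classical
  have hA0 : ∀ i j, 0 ≤ adjM E i j := by
    intro i j; unfold adjM; by_cases h : E i j <;> simp [h]
  by_contra hv0
  obtain ⟨i1, hi1⟩ : ∃ i, v i ≠ 0 := by
    by_contra h; push_neg at h; exact hv0 (funext h)
  obtain ⟨i0, -, hi0⟩ := Finset.exists_max_image Finset.univ (fun i => |v i|)
    ⟨i1, Finset.mem_univ _⟩
  set m : ℝ := |v i0| with hmdef
  have hm : 0 < m := lt_of_lt_of_le (abs_pos.mpr hi1) (hi0 i1 (Finset.mem_univ _))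
  set s : ℝ := if 0 < v i0 then 1 else -1 with hsdef
  set w : {i : V // i ∉ Z} → ℝ := fun i => s * v i with hw
  have hMw : ((lapM E).submatrix Subtype.val Subtype.val
      + ε⁻¹ • Matrix.diagonal φ).mulVec w = 0 := by
    have hws : w = s • v := rfl
    rw [hws, Matrix.mulVec_smul, hv]; simp
  have hwi0 : w i0 = m := by
    by_cases h : 0 < v i0
    · simp [hw, hsdef, h, hmdef, abs_of_pos h]
    · have hne : v i0 ≠ 0 := fun he => by simp [hmdef, he] at hm
      have hneg : v i0 < 0 := lt_of_le_of_ne (not_lt.mp h) hne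
      simp [hw, hsdef, h, hmdef, abs_of_neg hneg]
  have hwle : ∀ j, w j ≤ m := by
    intro j
    have habs : |w j| = |v j| := by
      rw [hw]; simp only [abs_mul]
      have hs1 : |s| = 1 := by rw [hsdef]; by_cases h : 0 < v i0 <;> simp [h]
      rw [hs1, one_mul]
    calc w j ≤ |w j| := le_abs_self _
      _ = |v j| := habs
      _ ≤ m := hi0 j (Finset.mem_univ _)
  -- extension of w by zero on Z
  set u : V → ℝ := fun l => if h : l ∈ Z then 0 else w ⟨l, h⟩ with hu
  have hule : ∀ l, u l ≤ m := by
    intro l; rw [hu]; by_cases h : l ∈ Z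
    · simpa [h] using hm.le
    · simpa [h] using hwle ⟨l, h⟩
  have hsumconv : ∀ j : V,
      (∑ k : {i : V // i ∉ Z}, adjM E j k.val * w k) = ∑ l : V, adjM E j l * u l := by
    intro j
    have h1 : ∀ k : {i : V // i ∉ Z}, adjM E j k.val * w k = adjM E j k.val * u k.val := by
      intro k; rw [hu]; simp [k.2]
    have h2 : ∑ l ∈ Z, adjM E j l * u l = 0 :=
      Finset.sum_eq_zero fun l hl => by rw [hu]; simp [hl]
    calc ∑ k : {i : V // i ∉ Z}, adjM E j k.val * w k
        = ∑ k : {i : V // i ∉ Z}, adjM E j k.val * u k.val :=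
          Finset.sum_congr rfl fun k _ => h1 k
      _ = ∑ l ∈ Zᶜ, adjM E j l * u l :=
          (Finset.sum_subtype Zᶜ (fun x => Finset.mem_compl) fun l => adjM E j l * u l).symm
      _ = ∑ l : V, adjM E j l * u l := by
          rw [← Finset.sum_compl_add_sum Z (fun l => adjM E j l * u l), h2, add_zero]
  -- maximum principle step
  have step : ∀ j : {i : V // i ∉ Z}, w j = m → ∀ j', E j.val j' →
      ∃ h' : j' ∉ Z, w ⟨j', h'⟩ = m := by
    intro j hj j' hE
    have h0 : ((lapM E).submatrix Subtype.val Subtype.val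
        + ε⁻¹ • Matrix.diagonal φ).mulVec w j = 0 := congrFun hMw j
    rw [stmt14_row, hj, hsumconv] at h0
    have hφm : 0 ≤ ε⁻¹ * (φ j * m) :=
      mul_nonneg (by positivity) (mul_nonneg (hφ j) hm.le)
    have hzero : ∑ l : V, adjM E j.val l * (m - u l) = 0 := by
      have hexp : ∑ l : V, adjM E j.val l * (m - u l)
          = (∑ l : V, adjM E j.val l) * m - ∑ l : V, adjM E j.val l * u l := by
        rw [Finset.sum_mul, ← Finset.sum_sub_distrib]
        exact Finset.sum_congr rfl fun l _ => by ring
      rw [hexp]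
      have hSle : (∑ l : V, adjM E j.val l * u l) ≤ (∑ l : V, adjM E j.val l) * m := by
        calc ∑ l : V, adjM E j.val l * u l ≤ ∑ l : V, adjM E j.val l * m :=
              Finset.sum_le_sum fun l _ => mul_le_mul_of_nonneg_left (hule l) (hA0 _ _)
          _ = (∑ l : V, adjM E j.val l) * m := by rw [Finset.sum_mul]
      linarith
    have hterm := (Finset.sum_eq_zero_iff_of_nonneg
      (fun l _ => mul_nonneg (hA0 j.val l) (by linarith [hule l]))).mp hzero j'
      (Finset.mem_univ _)
    have hAjj' : adjM E j.val j' = 1 := by unfold adjM; simp [hE]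
    rw [hAjj', one_mul, sub_eq_zero] at hterm
    -- hterm : m = u j'
    have hj'Z : j' ∉ Z := by
      intro hmem
      have h0' : u j' = 0 := by rw [hu]; simp [hmem]
      rw [h0'] at hterm
      linarith
    refine ⟨hj'Z, ?_⟩
    have h0' : u j' = w ⟨j', hj'Z⟩ := by rw [hu]; simp [hj'Z]
    rw [h0'] at hterm
    exact hterm.symm
  -- propagate along reachability to Z
  have reach : ∀ x, Relation.ReflTransGen E i0.val x → ∃ h : x ∉ Z, w ⟨x, h⟩ = m := by
    intro x hx
    induction hx with
    | refl => exact ⟨i0.2, hwi0⟩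
    | tail hab hbc ih =>
      obtain ⟨hb, hwb⟩ := ih
      exact step ⟨_, hb⟩ hwb _ hbc
  obtain ⟨z, hz⟩ := hZ
  obtain ⟨hznot, -⟩ := reach z (hconn i0.val z)
  exact hznot hz

/-- For `ε > 0` and `φ ≥ 0`, the matrix `L_{c,c} + ε⁻¹ diag(φ)` is invertible and the
solution of the penalized equation `L_{c,c} v_c + L_{c,m} e + ε⁻¹ φ ⊙ (v_c − e) = 0`
is `v_c = [L_{c,c} + ε⁻¹ diag(φ)]⁻¹ (ε⁻¹ φ − L_{c,m} e)`. -/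
theorem stmt14 {V : Type*} [Fintype V] [DecidableEq V]
    (E : V → V → Prop) [DecidableRel E]
    (hconn : ∀ i j : V, Relation.ReflTransGen E i j)
    (hdeg : ∀ i : V, ∃ j, E i j)
    (Z : Finset V) (hZ : Z.Nonempty) (Zm : Finset V) (hZm : Zm ⊆ Z)
    (ε : ℝ) (hε : 0 < ε)
    (φ : {i : V // i ∉ Z} → ℝ) (hφ : ∀ i, 0 ≤ φ i) :
    let Lcc : Matrix {i : V // i ∉ Z} {i : V // i ∉ Z} ℝ :=
      (lapM E).submatrix Subtype.val Subtype.val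
    let Lcm : Matrix {i : V // i ∉ Z} {i : V // i ∈ Zm} ℝ :=
      (lapM E).submatrix Subtype.val Subtype.val
    let M := Lcc + ε⁻¹ • Matrix.diagonal φ
    IsUnit M ∧
    ∀ vc : {i : V // i ∉ Z} → ℝ,
      (∀ i, Lcc.mulVec vc i + Lcm.mulVec (fun _ => 1) i + ε⁻¹ * (φ i * (vc i - 1)) = 0) →
      vc = M⁻¹.mulVec (fun i => ε⁻¹ * φ i - Lcm.mulVec (fun _ => 1) i) := by
  intro Lcc Lcm M
  have hunit : IsUnit M := by
    rw [← Matrix.mulVec_injective_iff_isUnit]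
    intro x y hxy
    have h := stmt14_ker E hconn Z hZ ε hε φ hφ (x - y)
      (by rw [Matrix.mulVec_sub, hxy, sub_self])
    exact sub_eq_zero.mp h
  refine ⟨hunit, ?_⟩
  intro vc hvc
  have hM : M.mulVec vc = fun i => ε⁻¹ * φ i - Lcm.mulVec (fun _ => 1) i := by
    funext i
    have h1 : M.mulVec vc i = Lcc.mulVec vc i + ε⁻¹ * (φ i * vc i) := by
      simp [M, Matrix.add_mulVec, Matrix.smul_mulVec, Matrix.mulVec_diagonal]
    have h2 := hvc i
    rw [h1]
    linear_combination h2
  have hinv : M⁻¹.mulVec (M.mulVec vc) = vc := by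
    rw [Matrix.mulVec_mulVec, Matrix.nonsing_inv_mul M
      ((Matrix.isUnit_iff_isUnit_det M).mp hunit), Matrix.one_mulVec]
  rw [← hinv, hM]
end
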